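/- Let α : S¹ → ℝ be a smooth function and let F = (F¹, F²) : S¹ × ℝ → S¹ × ℝ be a smooth map such that along the graph of α, |∂/∂s (F¹(s, α(s))) - 1| ≤ 1/2 and |∂/∂s (F²(s, α(s)))| ≤ 1/2 for all s ∈ S¹, and s ↦ F¹(s, α(s)) is a degree-one map of S¹. Then the image F({(s, α(s)) : s ∈ S¹}) is again the graph of a smooth function β : S¹ → ℝ, and |β'| ≤ (1/2)/(1 - 1/2) = 1 at corresponding points; more precisely β'(F¹(s,α(s))) = (d/ds F²(s,α(s))) / (d/ds F¹(s,α(s))). -/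

import Mathlib

open Set Real Filter

/- The cylinder `S¹ × ℝ` is represented by `ℝ × ℝ`, functions on `S¹` by
`2π`-periodic functions on `ℝ`, and a degree-one cylinder map by a lift
`F : ℝ × ℝ → ℝ × ℝ` with `F(s + 2π, t) = F(s, t) + (2π, 0)`. -/

/-- if a smooth cylinder map `F` restricted to the graph of `α`
has first component with derivative within `1/2` of `1` (a degree-one monotone
circle map) and second component with derivative at most `1/2`, then the image
of the graph of `α` is again a graph of a smooth function `β` with `|β'| ≤ 1`,
and `β'(F¹(s,α(s))) · (d/ds F¹(s,α(s))) = d/ds F²(s,α(s))`. -/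
theorem image_of_graph_is_graph
    (α : ℝ → ℝ) (hα : ContDiff ℝ (⊤ : ℕ∞) α) (hαper : Function.Periodic α (2 * π))
    (F : (ℝ × ℝ) → (ℝ × ℝ)) (hF : ContDiff ℝ (⊤ : ℕ∞) F)
    (hFper : ∀ s t, F (s + 2 * π, t) = ((F (s, t)).1 + 2 * π, (F (s, t)).2))
    (h1 : ∀ s, |deriv (fun s' => (F (s', α s')).1) s - 1| ≤ 1/2)
    (h2 : ∀ s, |deriv (fun s' => (F (s', α s')).2) s| ≤ 1/2) :
    ∃ β : ℝ → ℝ, ContDiff ℝ (⊤ : ℕ∞) β ∧ Function.Periodic β (2 * π) ∧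
      F '' {p : ℝ × ℝ | p.2 = α p.1} = {p : ℝ × ℝ | p.2 = β p.1} ∧
      (∀ s, |deriv β s| ≤ 1) ∧
      (∀ s, deriv β ((F (s, α s)).1) * deriv (fun s' => (F (s', α s')).1) s =
        deriv (fun s' => (F (s', α s')).2) s) := by
  set g : ℝ → ℝ := fun s => (F (s, α s)).1 with hg_def
  set f : ℝ → ℝ := fun s => (F (s, α s)).2 with hf_def
  have hcurve : ContDiff ℝ (⊤ : ℕ∞) (fun s : ℝ => F (s, α s)) :=
    hF.comp (contDiff_id.prodMk hα)
  have hg : ContDiff ℝ (⊤ : ℕ∞) g := contDiff_fst.comp hcurve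
  have hf : ContDiff ℝ (⊤ : ℕ∞) f := contDiff_snd.comp hcurve
  have hgd : Differentiable ℝ g := hg.differentiable (by simp)
  have hfd : Differentiable ℝ f := hf.differentiable (by simp)
  -- derivative bounds
  have hg_lb : ∀ s, (1:ℝ)/2 ≤ deriv g s := by
    intro s
    have := abs_le.1 (h1 s)
    linarith [this.1]
  have hg_pos : ∀ s, 0 < deriv g s := fun s => lt_of_lt_of_le (by norm_num) (hg_lb s)
  have hg_ne : ∀ s, deriv g s ≠ 0 := fun s => (hg_pos s).ne'
  have hmono : StrictMono g := strictMono_of_deriv_pos hg_pos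
  -- periodicity of g and f
  have hgper : ∀ s, g (s + 2 * π) = g s + 2 * π := by
    intro s
    simp only [hg_def, hαper s, hFper s (α s)]
  have hfper : ∀ s, f (s + 2 * π) = f s := by
    intro s
    simp only [hf_def, hαper s, hFper s (α s)]
  -- surjectivity of g
  have hslope : ∀ x y : ℝ, x ≤ y → (1:ℝ)/2 * (y - x) ≤ g y - g x :=
    mul_sub_le_image_sub_of_le_deriv hgd hg_lb
  have htop : Tendsto g atTop atTop := by
    have hcomp : Tendsto (fun x : ℝ => g 0 + 1/2 * x) atTop atTop :=
      tendsto_atTop_add_const_left _ _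
        ((tendsto_id (α := ℝ)).const_mul_atTop (by norm_num))
    apply tendsto_atTop_mono' atTop _ hcomp
    filter_upwards [eventually_ge_atTop (0:ℝ)] with x hx
    have := hslope 0 x hx
    simp only [sub_zero] at this
    linarith
  have hbot : Tendsto g atBot atBot := by
    have hcomp : Tendsto (fun x : ℝ => g 0 + 1/2 * x) atBot atBot :=
      tendsto_atBot_add_const_left _ _
        (Tendsto.const_mul_atBot (by norm_num) tendsto_id)
    apply tendsto_atBot_mono' atBot _ hcomp
    filter_upwards [eventually_le_atBot (0:ℝ)] with x hx
    have := hslope x 0 hx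
    linarith
  have hsurj : Function.Surjective g := hg.continuous.surjective htop hbot
  -- the homeomorphism given by `g`
  set E : ℝ ≃ₜ ℝ := (StrictMono.orderIsoOfSurjective g hmono hsurj).toHomeomorph with hE
  have hEcoe : ∀ x, E x = g x := fun _ => rfl
  set ginv : ℝ → ℝ := fun y => E.symm y with hginv_def
  have hright : ∀ y, g (ginv y) = y := fun y => E.apply_symm_apply y
  have hleft : ∀ s, ginv (g s) = s := fun s => E.symm_apply_apply s
  have hgderiv : ∀ x, HasDerivAt g (deriv g x) x := fun x => (hgd x).hasDerivAt
  -- smoothness of the inverse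
  have hginv_smooth : ContDiff ℝ (⊤ : ℕ∞) ginv :=
    E.contDiff_symm_deriv hg_ne hgderiv hg
  have hginv_cont : Continuous ginv := E.symm.continuous
  -- derivative of the inverse
  have hginv_deriv : ∀ y, HasDerivAt ginv (deriv g (ginv y))⁻¹ y := by
    intro y
    exact HasDerivAt.of_local_left_inverse (hginv_cont.continuousAt)
      (hgderiv (ginv y)) (hg_ne _) (Filter.Eventually.of_forall hright)
  -- definition of β
  refine ⟨fun y => f (ginv y), hf.comp hginv_smooth, ?_, ?_, ?_, ?_⟩
  · -- periodicity
    intro y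
    have hinv_per : ginv (y + 2 * π) = ginv y + 2 * π := by
      apply hmono.injective
      rw [hright, hgper, hright]
    simp only [hinv_per, hfper]
  · -- image is the graph of β
    ext ⟨x, y⟩
    simp only [Set.mem_image, Set.mem_setOf_eq]
    constructor
    · rintro ⟨⟨s, t⟩, ht, hFst⟩
      simp only [Set.mem_setOf_eq] at ht
      subst ht
      have hx : g s = x := congrArg Prod.fst hFst
      have hy' : f s = y := congrArg Prod.snd hFst
      show y = f (ginv x)
      rw [← hx, ← hy', hleft]
    · intro hy
      refine ⟨(ginv x, α (ginv x)), rfl, ?_⟩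
      have hx1 : (F (ginv x, α (ginv x))).1 = x := hright x
      have hx2 : (F (ginv x, α (ginv x))).2 = f (ginv x) := rfl
      have hy' : y = f (ginv x) := hy
      rw [hy']
      exact Prod.ext hx1 hx2
  · -- derivative bound
    intro y
    have hb : HasDerivAt (fun y => f (ginv y)) (deriv f (ginv y) * (deriv g (ginv y))⁻¹) y :=
      (hfd (ginv y)).hasDerivAt.comp y (hginv_deriv y)
    rw [hb.deriv, abs_mul, abs_inv]
    have h2' := h2 (ginv y)
    have hgb := hg_lb (ginv y)
    have habs : |deriv g (ginv y)| = deriv g (ginv y) := abs_of_pos (hg_pos _)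
    rw [habs]
    calc |deriv f (ginv y)| * (deriv g (ginv y))⁻¹
        ≤ (1/2) * (deriv g (ginv y))⁻¹ := by
          apply mul_le_mul_of_nonneg_right h2' (inv_nonneg.2 (hg_pos _).le)
      _ ≤ (1/2) * (1/2)⁻¹ := by
          apply mul_le_mul_of_nonneg_left _ (by norm_num)
          exact inv_anti₀ (by norm_num) hgb
      _ = 1 := by norm_num
  · -- chain-rule identity
    intro s
    have hb : HasDerivAt (fun y => f (ginv y)) (deriv f (ginv (g s)) * (deriv g (ginv (g s)))⁻¹)
        (g s) := (hfd (ginv (g s))).hasDerivAt.comp (g s) (hginv_deriv (g s))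
    show deriv (fun y => f (ginv y)) (g s) * deriv g s = deriv f s
    rw [hb.deriv, hleft]
    field_simp
    rw [mul_div_assoc, div_self (hg_ne s), mul_one]
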